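/- Assume [a₁,a₂] ⊆ [0,1] with a₁ < a₂, that m is strictly increasing on [a₁,a₂], and that a₁ < b < a₂. Then there exist a constant M > 0 and s₀ > 0 such that sup_{x ∈ [a₁,b]} w(s,x) ≤ M for every s ≥ s₀. -/

import Mathlib

/-!
Multiplying the equation by `w` and integrating by parts (the boundary conditions kill the
boundary term) gives `∫ (w' - s m' w)² = ∫ (λ - c) w²`, and testing the variational
characterization with constants gives `λ ≤ max c`; so `w' - s m' w` is bounded in `L²`
uniformly in `s`. Since `(e^{-s m} w)' = e^{-s m} (w' - s m' w)` and `m` increases on `[a₁, a₂]`,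
`w x ≤ |w y| + ∫ₓʸ |w' - s m' w|` for `x ≤ y` there. Choosing `y ∈ [b, a₂]` where `w²` is at
most `1 / (a₂ - b)` bounds `w` on `[a₁, b]`.
-/

open MeasureTheory Filter Set

/-- The Neumann principal eigenvalue of `-φ'' - 2 s m' φ' + c φ = λ φ` on `(0,1)`,
via its variational characterization. -/
noncomputable def lambdaN (m c : ℝ → ℝ) (s : ℝ) : ℝ :=
  sInf {l : ℝ | ∃ φ : ℝ → ℝ, ContDiff ℝ 1 φ ∧
    (∫ x in (0:ℝ)..1, Real.exp (2 * s * m x) * (φ x) ^ 2) = 1 ∧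
    l = ∫ x in (0:ℝ)..1, Real.exp (2 * s * m x) * ((deriv φ x) ^ 2 + c x * (φ x) ^ 2)}

/-- `v` is a positive, `L²`-normalized principal eigenfunction (in the transformed
variable `w = e^{s m} φ`) associated with the eigenvalue `lam` and parameter `s`. -/
def IsPrincipalEigenfunction (m c : ℝ → ℝ) (lam s : ℝ) (v : ℝ → ℝ) : Prop :=
  ContDiff ℝ 2 v ∧ (∀ x ∈ Set.Icc (0:ℝ) 1, 0 < v x) ∧
  (∀ x ∈ Set.Ioo (0:ℝ) 1,
    -(deriv (deriv v) x) + (s ^ 2 * (deriv m x) ^ 2 + s * deriv (deriv m) x + c x) * v x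
      = lam * v x) ∧
  deriv v 0 = s * v 0 * deriv m 0 ∧ deriv v 1 = s * v 1 * deriv m 1 ∧
  (∫ x in (0:ℝ)..1, (v x) ^ 2) = 1

lemma exists_mem_Icc_mul_sq_le_integral {f : ℝ → ℝ} {a b : ℝ} (hf : Continuous f)
    (hab : a ≤ b) : ∃ x ∈ Icc a b, (b - a) * f x ^ 2 ≤ ∫ t in a..b, f t ^ 2 := by
  obtain ⟨x, hx, hmin⟩ :=
    isCompact_Icc.exists_isMinOn (nonempty_Icc.2 hab) (hf.pow 2).continuousOn
  refine ⟨x, hx, ?_⟩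
  have := intervalIntegral.integral_mono_on hab (intervalIntegrable_const (μ := volume))
    ((hf.pow 2).intervalIntegrable a b) fun t ht => hmin ht
  rwa [intervalIntegral.integral_const, smul_eq_mul] at this

lemma integral_abs_le_half_add_integral_sq {g : ℝ → ℝ} {a b : ℝ} (hg : Continuous g)
    (hab : a ≤ b) : ∫ t in a..b, |g t| ≤ ((b - a) + ∫ t in a..b, g t ^ 2) / 2 := by
  calc ∫ t in a..b, |g t| ≤ ∫ t in a..b, (1 + g t ^ 2) / 2 :=
        intervalIntegral.integral_mono_on hab (hg.abs.intervalIntegrable a b)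
          (Continuous.intervalIntegrable (by fun_prop) _ _) fun t _ => by
            nlinarith [sq_nonneg (|g t| - 1), sq_abs (g t)]
    _ = _ := by
      rw [intervalIntegral.integral_div, intervalIntegral.integral_add (g := fun t => g t ^ 2)
        intervalIntegrable_const ((hg.pow 2).intervalIntegrable a b),
        intervalIntegral.integral_const, smul_eq_mul, mul_one]

lemma le_abs_add_integral_abs_of_monotoneOn {m w : ℝ → ℝ} {s x y : ℝ} (hm : ContDiff ℝ 1 m)
    (hw : ContDiff ℝ 1 w) (hs : 0 ≤ s) (hxy : x ≤ y) (hmono : MonotoneOn m (Icc x y)) :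
    w x ≤ |w y| + ∫ t in x..y, |deriv w t - s * deriv m t * w t| := by
  set g : ℝ → ℝ := fun t => deriv w t - s * deriv m t * w t
  have hmd := hm.differentiable one_ne_zero
  have hwd := hw.differentiable one_ne_zero
  have hmc := hm.continuous
  have hm'c := hm.continuous_deriv le_rfl
  have hwc := hw.continuous
  have hw'c := hw.continuous_deriv le_rfl
  have hu : ∀ t, HasDerivAt (fun t => Real.exp (-(s * m t)) * w t)
      (Real.exp (-(s * m t)) * g t) t := by
    intro t
    have hd : HasDerivAt (fun t => Real.exp (-(s * m t)) * w t) _ t :=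
      (((hmd t).hasDerivAt.const_mul s).neg.exp).mul (hwd t).hasDerivAt
    refine hd.congr_deriv ?_
    simp only [g, Pi.neg_apply]
    ring
  have hrepr : w x = Real.exp (s * (m x - m y)) * w y -
      ∫ t in x..y, Real.exp (s * (m x - m t)) * g t := by
    have hexp : ∀ t, Real.exp (s * (m x - m t)) = Real.exp (s * m x) * Real.exp (-(s * m t)) := by
      intro t; rw [← Real.exp_add]; ring_nf
    simp_rw [hexp, mul_assoc, intervalIntegral.integral_const_mul]
    rw [intervalIntegral.integral_eq_sub_of_hasDerivAt (fun t _ => hu t)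
      (Continuous.intervalIntegrable (by fun_prop) _ _), Real.exp_neg, Real.exp_neg]
    field_simp
    ring
  have hfactor : ∀ t ∈ Icc x y, 0 < Real.exp (s * (m x - m t)) ∧ Real.exp (s * (m x - m t)) ≤ 1 :=
    fun t ht => ⟨Real.exp_pos _, Real.exp_le_one_iff.2
      (mul_nonpos_of_nonneg_of_nonpos hs (sub_nonpos.2 (hmono ⟨le_rfl, hxy⟩ ht ht.1)))⟩
  have hfirst : Real.exp (s * (m x - m y)) * w y ≤ |w y| :=
    (mul_le_mul_of_nonneg_left (le_abs_self _) (hfactor y ⟨hxy, le_rfl⟩).1.le).trans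
      (mul_le_of_le_one_left (abs_nonneg _) (hfactor y ⟨hxy, le_rfl⟩).2)
  have hsecond : -∫ t in x..y, Real.exp (s * (m x - m t)) * g t ≤ ∫ t in x..y, |g t| :=
    calc _ ≤ ∫ t in x..y, |Real.exp (s * (m x - m t)) * g t| :=
          (neg_le_abs _).trans (intervalIntegral.abs_integral_le_integral_abs hxy)
      _ ≤ _ := intervalIntegral.integral_mono_on hxy
          (Continuous.intervalIntegrable (by fun_prop) _ _)
          (Continuous.intervalIntegrable (by fun_prop) _ _) fun t ht => by
            rw [abs_mul, abs_of_pos (hfactor t ht).1]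
            exact mul_le_of_le_one_left (abs_nonneg _) (hfactor t ht).2
  linarith

section LambdaN

variable {m c : ℝ → ℝ} {s : ℝ}

lemma le_energy {φ : ℝ → ℝ} {L : ℝ} (hm : Continuous m) (hc : Continuous c)
    (hφ : ContDiff ℝ 1 φ) (hL : ∀ x ∈ Icc (0:ℝ) 1, L ≤ c x)
    (hnorm : ∫ x in (0:ℝ)..1, Real.exp (2 * s * m x) * φ x ^ 2 = 1) :
    L ≤ ∫ x in (0:ℝ)..1, Real.exp (2 * s * m x) * (deriv φ x ^ 2 + c x * φ x ^ 2) := by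
  have hφc := hφ.continuous
  have hφ'c := hφ.continuous_deriv le_rfl
  calc L = ∫ x in (0:ℝ)..1, L * (Real.exp (2 * s * m x) * φ x ^ 2) := by
        rw [intervalIntegral.integral_const_mul, hnorm, mul_one]
    _ ≤ _ := by
      refine intervalIntegral.integral_mono_on zero_le_one
        (Continuous.intervalIntegrable (by fun_prop) _ _)
        (Continuous.intervalIntegrable (by fun_prop) _ _) fun x hx => ?_
      have he := (Real.exp_pos (2 * s * m x)).le
      nlinarith [mul_nonneg (mul_nonneg he (sq_nonneg (φ x))) (sub_nonneg.2 (hL x hx)),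
        mul_nonneg he (sq_nonneg (deriv φ x))]

lemma lambdaN_le_energy {φ : ℝ → ℝ} (hm : Continuous m) (hc : Continuous c)
    (hφ : ContDiff ℝ 1 φ)
    (hnorm : ∫ x in (0:ℝ)..1, Real.exp (2 * s * m x) * φ x ^ 2 = 1) :
    lambdaN m c s ≤
      ∫ x in (0:ℝ)..1, Real.exp (2 * s * m x) * (deriv φ x ^ 2 + c x * φ x ^ 2) := by
  obtain ⟨L, hL⟩ := (isCompact_Icc (a := (0:ℝ)) (b := 1)).bddBelow_image hc.continuousOn
  refine csInf_le ⟨L, ?_⟩ ⟨φ, hφ, hnorm, rfl⟩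
  rintro _ ⟨ψ, hψ, hψnorm, rfl⟩
  exact le_energy hm hc hψ (fun x hx => hL (mem_image_of_mem c hx)) hψnorm

lemma lambdaN_le_of_forall_le {C : ℝ} (hm : Continuous m) (hc : Continuous c)
    (hC : ∀ x ∈ Icc (0:ℝ) 1, c x ≤ C) : lambdaN m c s ≤ C := by
  set I := ∫ x in (0:ℝ)..1, Real.exp (2 * s * m x)
  have hI : 0 < I := intervalIntegral.intervalIntegral_pos_of_pos
    (Continuous.intervalIntegrable (by fun_prop) _ _) (fun x => Real.exp_pos _) one_pos
  set K := (Real.sqrt I)⁻¹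
  have hK : K ^ 2 * I = 1 := by
    rw [inv_pow, Real.sq_sqrt hI.le, inv_mul_cancel₀ hI.ne']
  have hnorm : ∫ x in (0:ℝ)..1, Real.exp (2 * s * m x) * (fun _ => K) x ^ 2 = 1 := by
    rw [intervalIntegral.integral_mul_const, mul_comm, hK]
  refine (lambdaN_le_energy hm hc contDiff_const hnorm).trans ?_
  calc _ ≤ ∫ x in (0:ℝ)..1, C * K ^ 2 * Real.exp (2 * s * m x) := by
        refine intervalIntegral.integral_mono_on zero_le_one
          (Continuous.intervalIntegrable (by fun_prop) _ _)
          (Continuous.intervalIntegrable (by fun_prop) _ _) fun x hx => ?_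
        rw [deriv_const]
        have := mul_le_mul_of_nonneg_right (hC x hx) (sq_nonneg K)
        have := (Real.exp_pos (2 * s * m x)).le
        nlinarith
    _ = C := by rw [intervalIntegral.integral_const_mul, mul_assoc, hK, mul_one]

end LambdaN

namespace IsPrincipalEigenfunction

variable {m c v : ℝ → ℝ} {lam s : ℝ}

lemma integral_sq_eq (hv : IsPrincipalEigenfunction m c lam s v) (hm : ContDiff ℝ 2 m)
    (hc : Continuous c) :
    ∫ x in (0:ℝ)..1, (deriv v x - s * deriv m x * v x) ^ 2 =
      ∫ x in (0:ℝ)..1, (lam - c x) * v x ^ 2 := by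
  obtain ⟨hv2, -, hode, hbc0, hbc1, -⟩ := hv
  have hv' : ContDiff ℝ 1 (deriv v) := hv2.deriv' (n := 1)
  have hm' : ContDiff ℝ 1 (deriv m) := hm.deriv' (n := 1)
  have hvd := hv2.differentiable two_ne_zero
  have hv'd := hv'.differentiable one_ne_zero
  have hm'd := hm'.differentiable one_ne_zero
  have hvc := hvd.continuous
  have hv'c := hv'd.continuous
  have hm'c := hm'd.continuous
  -- `F` vanishes at both ends by the boundary conditions, and `F'` is the difference of integrands
  set F : ℝ → ℝ := fun x => deriv v x * v x - s * deriv m x * v x ^ 2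
  have hF : ∀ x ∈ Ioo (0:ℝ) 1, HasDerivAt F
      ((deriv v x - s * deriv m x * v x) ^ 2 - (lam - c x) * v x ^ 2) x := by
    intro x hx
    have hd : HasDerivAt F _ x := ((hv'd x).hasDerivAt.mul (hvd x).hasDerivAt).sub
      (((hm'd x).hasDerivAt.const_mul s).mul ((hvd x).hasDerivAt.pow 2))
    refine hd.congr_deriv ?_
    have : deriv (deriv v) x =
        (s ^ 2 * deriv m x ^ 2 + s * deriv (deriv m) x + c x - lam) * v x := by
      linarith [hode x hx]
    rw [this]; push_cast; ring
  have hint := intervalIntegral.integral_eq_sub_of_hasDeriv_right_of_le zero_le_one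
    (by fun_prop) (fun x hx => (hF x hx).hasDerivWithinAt)
    (Continuous.intervalIntegrable (by fun_prop) _ _)
  rw [intervalIntegral.integral_sub (Continuous.intervalIntegrable (by fun_prop) _ _)
    (Continuous.intervalIntegrable (by fun_prop) _ _)] at hint
  simp only [F, hbc0, hbc1] at hint
  linarith

lemma integral_sq_le {B : ℝ} (hv : IsPrincipalEigenfunction m c lam s v) (hm : ContDiff ℝ 2 m)
    (hc : Continuous c) (hB : ∀ x ∈ Icc (0:ℝ) 1, lam - c x ≤ B) :
    ∫ x in (0:ℝ)..1, (deriv v x - s * deriv m x * v x) ^ 2 ≤ B := by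
  have hvc : Continuous v := hv.1.continuous
  calc _ = ∫ x in (0:ℝ)..1, (lam - c x) * v x ^ 2 := hv.integral_sq_eq hm hc
    _ ≤ ∫ x in (0:ℝ)..1, B * v x ^ 2 :=
      intervalIntegral.integral_mono_on zero_le_one
        (Continuous.intervalIntegrable (by fun_prop) _ _)
        (Continuous.intervalIntegrable (by fun_prop) _ _)
        fun x hx => mul_le_mul_of_nonneg_right (hB x hx) (sq_nonneg _)
    _ = B := by rw [intervalIntegral.integral_const_mul, hv.2.2.2.2.2, mul_one]

end IsPrincipalEigenfunction

lemma le_add_integral_sq_of_monotoneOn {m v : ℝ → ℝ} {s a₁ a₂ b x : ℝ} (hm : ContDiff ℝ 1 m)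
    (hv : ContDiff ℝ 1 v) (hs : 0 ≤ s) (ha₁ : 0 ≤ a₁) (ha₂ : a₂ ≤ 1) (hb₂ : b < a₂)
    (hmono : MonotoneOn m (Icc a₁ a₂)) (hnorm : ∫ t in (0:ℝ)..1, v t ^ 2 ≤ 1)
    (hx : x ∈ Icc a₁ b) :
    v x ≤ (1 + 1 / (a₂ - b)) / 2 +
      (1 + ∫ t in (0:ℝ)..1, (deriv v t - s * deriv m t * v t) ^ 2) / 2 := by
  have hsub : ∀ {f : ℝ → ℝ} {p q : ℝ}, Continuous f → 0 ≤ p → p ≤ q → q ≤ 1 →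
      ∫ t in p..q, f t ^ 2 ≤ ∫ t in (0:ℝ)..1, f t ^ 2 := fun hf h0 hpq h1 =>
    intervalIntegral.integral_mono_interval h0 hpq h1 (.of_forall fun _ => sq_nonneg _)
      ((hf.pow 2).intervalIntegrable 0 1)
  obtain ⟨y, hy, hvy⟩ := exists_mem_Icc_mul_sq_le_integral hv.continuous hb₂.le
  have hvy : |v y| ≤ (1 + 1 / (a₂ - b)) / 2 := by
    have hsq : v y ^ 2 ≤ 1 / (a₂ - b) := by
      rw [le_div_iff₀ (sub_pos.2 hb₂), mul_comm]
      exact hvy.trans ((hsub hv.continuous (ha₁.trans (hx.1.trans hx.2)) hb₂.le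
        ha₂).trans hnorm)
    nlinarith [sq_nonneg (|v y| - 1), sq_abs (v y)]
  have hxy : x ≤ y := hx.2.trans hy.1
  have hgc : Continuous fun t => deriv v t - s * deriv m t * v t :=
    (hv.continuous_deriv le_rfl).sub
      ((continuous_const.mul (hm.continuous_deriv le_rfl)).mul hv.continuous)
  calc v x ≤ |v y| + ∫ t in x..y, |deriv v t - s * deriv m t * v t| :=
        le_abs_add_integral_abs_of_monotoneOn hm hv hs hxy
          (hmono.mono (Icc_subset_Icc hx.1 hy.2))
    _ ≤ (1 + 1 / (a₂ - b)) / 2 +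
        ((y - x) + ∫ t in x..y, (deriv v t - s * deriv m t * v t) ^ 2) / 2 :=
        add_le_add hvy (integral_abs_le_half_add_integral_sq hgc hxy)
    _ ≤ _ := by
      gcongr
      · linarith [hx.1, hy.2]
      · exact hsub hgc (ha₁.trans hx.1) hxy (hy.2.trans ha₂)

theorem eigenfunction_uniformly_bounded_of_strictMono
    (m c : ℝ → ℝ) (hm : ContDiff ℝ 2 m) (hc : Continuous c)
    (w : ℝ → ℝ → ℝ)
    (hw : ∀ s > (0:ℝ), IsPrincipalEigenfunction m c (lambdaN m c s) s (w s))
    (a₁ a₂ b : ℝ) (ha₁ : 0 ≤ a₁) (ha₂ : a₂ ≤ 1)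
    (hmono : StrictMonoOn m (Set.Icc a₁ a₂))
    (hb₂ : b < a₂) :
    ∃ M > (0:ℝ), ∃ s₀ > (0:ℝ), ∀ s ≥ s₀, ∀ x ∈ Set.Icc a₁ b, w s x ≤ M := by
  obtain ⟨K, hK⟩ := (isCompact_Icc (a := (0:ℝ)) (b := 1)).exists_bound_of_continuousOn
    hc.continuousOn
  have hK0 : 0 ≤ K := (norm_nonneg _).trans (hK 0 ⟨le_rfl, zero_le_one⟩)
  have hab : 0 < 1 / (a₂ - b) := one_div_pos.2 (sub_pos.2 hb₂)
  refine ⟨(1 + 1 / (a₂ - b)) / 2 + (1 + 2 * K) / 2, by positivity, 1, one_pos,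
    fun s hs x hx => ?_⟩
  have hv := hw s (one_pos.trans_le hs)
  have hlam : lambdaN m c s ≤ K := lambdaN_le_of_forall_le hm.continuous hc fun x hx =>
    (le_abs_self _).trans (hK x hx)
  have hg := hv.integral_sq_le hm hc (B := 2 * K) fun x hx => by
    linarith [neg_abs_le (c x), hK x hx, Real.norm_eq_abs (c x)]
  calc w s x ≤ _ := le_add_integral_sq_of_monotoneOn (hm.of_le one_le_two) (hv.1.of_le one_le_two)
        (zero_le_one.trans hs) ha₁ ha₂ hb₂ hmono.monotoneOn hv.2.2.2.2.2.le hx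
    _ ≤ _ := by gcongr
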